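/- (Sections of null sets) Let μ, ν be finite measures on semirings in X and Y respectively, and let μ×ν be the product measure on the product semiring. If E ⊂ X×Y is a null set for μ×ν, then for almost every x ∈ X the section {y ∈ Y : (x,y) ∈ E} is a null set in Y. -/

import Mathlib

open Filter Set

/-- A semiring of sets. -/
structure IsSemiring {X : Type*} (P : Set (Set X)) : Prop where
  empty_mem : ∅ ∈ P
  inter_mem : ∀ ⦃A B : Set X⦄, A ∈ P → B ∈ P → A ∩ B ∈ P
  diff_eq : ∀ ⦃A B : Set X⦄, A ∈ P → B ∈ P →
    ∃ (n : ℕ) (C : Fin n → Set X), (∀ i, C i ∈ P) ∧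
      Pairwise (Function.onFun Disjoint C) ∧ A \ B = ⋃ i, C i

/-- A finite (real-valued, nonnegative, σ-additive) measure on a semiring. -/
structure IsPremeasure {X : Type*} (P : Set (Set X)) (m : Set X → ℝ) : Prop where
  nonneg : ∀ ⦃A : Set X⦄, A ∈ P → 0 ≤ m A
  empty : m ∅ = 0
  sigma_additive : ∀ (A : Set X) (B : ℕ → Set X), A ∈ P → (∀ n, B n ∈ P) →
    Pairwise (Function.onFun Disjoint B) → A = (⋃ n, B n) →
    HasSum (fun n => m (B n)) (m A)

/-- `N` is a null set for the measure `m` on the semiring `P`. -/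
def NullFor {X : Type*} (P : Set (Set X)) (m : Set X → ℝ) (N : Set X) : Prop :=
  ∀ ε > 0, ∃ B : ℕ → Set X, (∀ n, B n ∈ P) ∧ N ⊆ (⋃ n, B n) ∧
    ∃ L : ℝ, HasSum (fun n => m (B n)) L ∧ L < ε

/-- A property holds almost everywhere w.r.t. `(P, m)`. -/
def AEFor {X : Type*} (P : Set (Set X)) (m : Set X → ℝ) (Pr : X → Prop) : Prop :=
  NullFor P m {x | ¬ Pr x}

/-- `φ` is a step function over `P` with elementary integral `v`. -/
def StepIntP {X : Type*} (P : Set (Set X)) (m : Set X → ℝ)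
    (φ : X → ℝ) (v : ℝ) : Prop :=
  ∃ (n : ℕ) (c : Fin n → ℝ) (A : Fin n → Set X), (∀ i, A i ∈ P) ∧
    (∀ x, φ x = ∑ i, c i * (A i).indicator 1 x) ∧ v = ∑ i, c i * m (A i)

/-- `f ∈ R₁` over `(P, m)` with integral `I`: `f` is an a.e. nondecreasing
limit of step functions whose integrals tend to `I`. -/
def R1IntP {X : Type*} (P : Set (Set X)) (m : Set X → ℝ)
    (f : X → EReal) (I : EReal) : Prop :=
  ∃ (φ : ℕ → X → ℝ) (v : ℕ → ℝ), (∀ n, StepIntP P m (φ n) (v n)) ∧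
    AEFor P m (fun x => Monotone (fun n => φ n x) ∧
      Tendsto (fun n => (φ n x : EReal)) atTop (nhds (f x))) ∧
    Tendsto (fun n => (v n : EReal)) atTop (nhds I)

/-- `f ∈ R₂` over `(P, m)` with integral `J = I₁ − I₂`. -/
def R2IntP {X : Type*} (P : Set (Set X)) (m : Set X → ℝ)
    (f : X → EReal) (J : EReal) : Prop :=
  ∃ f₁ f₂ I₁ I₂, R1IntP P m f₁ I₁ ∧ R1IntP P m f₂ I₂ ∧ (I₁ ≠ ⊤ ∨ I₂ ≠ ⊤) ∧
    AEFor P m (fun x => f x = f₁ x - f₂ x) ∧ J = I₁ - I₂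

/-- The product semiring of rectangles. -/
def ProdSemiring {X Y : Type*} (P : Set (Set X)) (Q : Set (Set Y)) :
    Set (Set (X × Y)) :=
  {S | ∃ A ∈ P, ∃ B ∈ Q, S = A ×ˢ B}

/-!
For each `k` cover `E` by rectangles `A k n ×ˢ C k n` with `∑ₙ μ (A k n) * ν (C k n) < 2⁻¹ ^ k`
and let `f k x = ∑ₙ ν (C k n) * 1_{A k n} x`, the total mass of the induced cover of the section at
`x`. Against the Carathéodory measure `ρ` of the outer measure induced by `μ` (which only needs
finite additivity of `μ` and satisfies `ρ ≤ μ` on `P`) we get `∑ₖ ∫ f k ∂ρ < ∞`, so `f k x → 0`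
for `ρ`-almost every `x`, and at such `x` the section is null. A `ρ`-null set has outer measure
zero, i.e. it is `μ`-null.
-/

open MeasureTheory
open scoped ENNReal Function Topology

theorem nullFor_iff_exists_tsum_lt {X : Type*} {P : Set (Set X)} {m : Set X → ℝ}
    (hm : ∀ ⦃A⦄, A ∈ P → 0 ≤ m A) {N : Set X} :
    NullFor P m N ↔ ∀ ε : ℝ≥0∞, 0 < ε → ∃ B : ℕ → Set X, (∀ n, B n ∈ P) ∧ N ⊆ ⋃ n, B n ∧
      ∑' n, ENNReal.ofReal (m (B n)) < ε := by
  have tsum_ofReal {B : ℕ → Set X} (hB : ∀ n, B n ∈ P) {L : ℝ}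
      (hL : HasSum (fun n => m (B n)) L) : ∑' n, ENNReal.ofReal (m (B n)) = ENNReal.ofReal L := by
    rw [← ENNReal.ofReal_tsum_of_nonneg (fun n => hm (hB n)) hL.summable, hL.tsum_eq]
  constructor
  · intro h ε hε
    obtain ⟨r, -, hr, hrε⟩ := ENNReal.lt_iff_exists_real_btwn.1 hε
    obtain ⟨B, hB, hN, L, hL, hLr⟩ := h r (ENNReal.ofReal_pos.1 hr)
    refine ⟨B, hB, hN, ?_⟩
    rw [tsum_ofReal hB hL]
    exact lt_of_le_of_lt (ENNReal.ofReal_le_ofReal hLr.le) hrε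
  · intro h ε hε
    obtain ⟨B, hB, hN, hlt⟩ := h (ENNReal.ofReal ε) (ENNReal.ofReal_pos.2 hε)
    have hsum : Summable fun n => m (B n) :=
      (ENNReal.summable_toReal hlt.ne_top).congr fun n => ENNReal.toReal_ofReal (hm (hB n))
    refine ⟨B, hB, hN, _, hsum.hasSum, ?_⟩
    rw [tsum_ofReal hB hsum.hasSum] at hlt
    exact (ENNReal.ofReal_lt_ofReal_iff hε).1 hlt

theorem IsSemiring.isSetSemiring {X : Type*} {P : Set (Set X)} (hP : IsSemiring P) :
    IsSetSemiring P where
  empty_mem := hP.empty_mem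
  inter_mem _ hA _ hB := hP.inter_mem hA hB
  sdiff_eq_sUnion' A hA B hB := by
    classical
    obtain ⟨n, C, hC, hd, hAB⟩ := hP.diff_eq hA hB
    refine ⟨Finset.univ.image C, by simpa [Set.subset_def] using hC, ?_, by simp [hAB]⟩
    rintro _ hu _ hv huv
    obtain ⟨i, -, rfl⟩ := Finset.mem_image.1 hu
    obtain ⟨j, -, rfl⟩ := Finset.mem_image.1 hv
    exact hd fun hij => huv (congrArg C hij)

namespace IsPremeasure

variable {X : Type*} {P : Set (Set X)} {μ : Set X → ℝ}

theorem hasSum_of_encodable (hμ : IsPremeasure P μ) (hP : ∅ ∈ P) {ι : Type*} [Encodable ι]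
    {B : ι → Set X} (hB : ∀ i, B i ∈ P) (hd : Pairwise (Disjoint on B)) (hU : ⋃ i, B i ∈ P) :
    HasSum (fun i => μ (B i)) (μ (⋃ i, B i)) := by
  set B' : ℕ → Set X := fun n => ⋃ i ∈ Encodable.decode₂ ι n, B i
  have hB' : HasSum (fun n => μ (B' n)) (μ (⋃ i, B i)) := by
    refine hμ.sigma_additive _ B' hU (fun n => Encodable.iUnion_decode₂_cases (C := (· ∈ P)) hP hB)
      (Encodable.iUnion_decode₂_disjoint_on hd) (Encodable.iUnion_decode₂ B).symm
  have hzero : ∀ n ∉ Set.range (Encodable.encode (α := ι)), μ (B' n) = 0 := by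
    intro n hn
    have hempty : B' n = ∅ := by
      simp only [B', Set.iUnion_eq_empty]
      exact fun i hi => absurd ⟨i, Encodable.mem_decode₂.1 hi⟩ hn
    rw [hempty, hμ.empty]
  have := (Encodable.encode_injective.hasSum_iff hzero).2 hB'
  simpa [B', Function.comp_def, Encodable.decode₂_encode] using this

theorem eq_sum_of_sUnion (hμ : IsPremeasure P μ) (hP : ∅ ∈ P) {I : Finset (Set X)}
    (hI : ↑I ⊆ P) (hd : (I : Set (Set X)).PairwiseDisjoint id) (hU : ⋃₀ ↑I ∈ P) :
    μ (⋃₀ ↑I) = ∑ u ∈ I, μ u := by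
  let _ : Encodable I := Fintype.toEncodable I
  rw [Set.sUnion_eq_iUnion] at hU ⊢
  have h := hμ.hasSum_of_encodable hP (B := fun u : I => (u : Set X)) (fun u => hI u.2)
    (fun u v huv => hd u.2 v.2 (Subtype.coe_ne_coe.2 huv)) hU
  exact (h.unique (hasSum_fintype _)).trans (Finset.sum_coe_sort I μ)

noncomputable def toAddContent (hμ : IsPremeasure P μ) (hP : ∅ ∈ P) : AddContent ℝ≥0∞ P where
  toFun s := ENNReal.ofReal (μ s)
  empty' := by simp [hμ.empty]
  sUnion' I hI hd hU := by
    rw [hμ.eq_sum_of_sUnion hP hI hd hU,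
      ENNReal.ofReal_sum_of_nonneg fun u hu => hμ.nonneg (hI hu)]

noncomputable def outerMeasure (hμ : IsPremeasure P μ) (hP : ∅ ∈ P) : OuterMeasure X :=
  inducedOuterMeasure (fun s _ => hμ.toAddContent hP s) hP addContent_empty

theorem outerMeasure_le (hμ : IsPremeasure P μ) (hP : ∅ ∈ P) {A : Set X} (hA : A ∈ P) :
    hμ.outerMeasure hP A ≤ ENNReal.ofReal (μ A) := by
  unfold outerMeasure inducedOuterMeasure
  exact (OuterMeasure.ofFunction_le A).trans_eq (extend_eq _ hA)

theorem isCaratheodory_outerMeasure (hμ : IsPremeasure P μ) (hP : IsSemiring P) {A : Set X}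
    (hA : A ∈ P) : (hμ.outerMeasure hP.empty_mem).IsCaratheodory A :=
  AddContent.isCaratheodory_inducedOuterMeasure_of_mem hP.isSetSemiring _ hA

theorem nullFor_of_outerMeasure_eq_zero (hμ : IsPremeasure P μ) (hP : ∅ ∈ P) {N : Set X}
    (hN : hμ.outerMeasure hP N = 0) : NullFor P μ N := by
  rw [nullFor_iff_exists_tsum_lt hμ.nonneg]
  intro ε hε
  rw [outerMeasure, inducedOuterMeasure,
    OuterMeasure.ofFunction_eq_iInf_mem _ _ fun s hs => extend_eq_top _ hs] at hN
  rw [← hN] at hε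
  simp only [iInf_lt_iff] at hε
  obtain ⟨B, hB, hNB, hlt⟩ := hε
  refine ⟨B, hB, hNB, ?_⟩
  simp only [extend_eq _ (hB _)] at hlt
  exact hlt

end IsPremeasure

theorem ae_tendsto_zero_of_tsum_lintegral_ne_top {α : Type*} [MeasurableSpace α] {ρ : Measure α}
    {f : ℕ → α → ℝ≥0∞} (hf : ∀ k, Measurable (f k)) (h : ∑' k, ∫⁻ x, f k x ∂ρ ≠ ∞) :
    ∀ᵐ x ∂ρ, Tendsto (fun k => f k x) atTop (𝓝 0) := by
  rw [← lintegral_tsum fun k => (hf k).aemeasurable] at h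
  filter_upwards [ae_lt_top (Measurable.tsum hf) h] with x hx
  exact ENNReal.tendsto_atTop_zero_of_tsum_ne_top hx.ne

theorem nullFor_section_of_tendsto {X Y : Type*} {Q : Set (Set Y)} {ν : Set Y → ℝ}
    (hQ : ∅ ∈ Q) (hν : IsPremeasure Q ν) {E : Set (X × Y)} {A : ℕ → ℕ → Set X}
    {C : ℕ → ℕ → Set Y} (hC : ∀ k n, C k n ∈ Q) (hE : ∀ k, E ⊆ ⋃ n, A k n ×ˢ C k n) {x : X}
    (hx : Tendsto (fun k => ∑' n, (A k n).indicator (fun _ => ENNReal.ofReal (ν (C k n))) x)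
      atTop (𝓝 0)) :
    NullFor Q ν {y | (x, y) ∈ E} := by
  classical
  rw [nullFor_iff_exists_tsum_lt hν.nonneg]
  intro ε hε
  obtain ⟨k, hk⟩ := (hx.eventually (gt_mem_nhds hε)).exists
  refine ⟨fun n => if x ∈ A k n then C k n else ∅, ?_, ?_, ?_⟩
  · intro n
    by_cases hxn : x ∈ A k n <;> simp [hxn, hC, hQ]
  · intro y hy
    obtain ⟨n, hxn, hyn⟩ : ∃ n, x ∈ A k n ∧ y ∈ C k n := by simpa using hE k hy
    exact Set.mem_iUnion.2 ⟨n, by simpa [hxn] using hyn⟩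
  · convert hk using 3 with n
    by_cases hxn : x ∈ A k n <;> simp [hxn, hν.empty]

theorem ae_nullFor_section {X Y : Type*} [MeasurableSpace X] (ρ : Measure X)
    {P : Set (Set X)} {Q : Set (Set Y)} {μ : Set X → ℝ} {ν : Set Y → ℝ} {π : Set (X × Y) → ℝ}
    (hPm : ∀ A ∈ P, MeasurableSet A) (hρ : ∀ A ∈ P, ρ A ≤ ENNReal.ofReal (μ A))
    (hμ : IsPremeasure P μ) (hQ : ∅ ∈ Q) (hν : IsPremeasure Q ν)
    (hπ : ∀ A ∈ P, ∀ B ∈ Q, π (A ×ˢ B) = μ A * ν B) {E : Set (X × Y)}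
    (hE : NullFor (ProdSemiring P Q) π E) :
    ∀ᵐ x ∂ρ, NullFor Q ν {y | (x, y) ∈ E} := by
  have hπ0 : ∀ ⦃R⦄, R ∈ ProdSemiring P Q → 0 ≤ π R := by
    rintro _ ⟨A, hA, C, hC, rfl⟩
    rw [hπ A hA C hC]
    exact mul_nonneg (hμ.nonneg hA) (hν.nonneg hC)
  choose R hR hER hRsum using fun k : ℕ =>
    (nullFor_iff_exists_tsum_lt hπ0).1 hE (2⁻¹ ^ k) (ENNReal.pow_pos (by norm_num) k)
  choose A hA C hC hRAC using hR
  set f : ℕ → X → ℝ≥0∞ := fun k x =>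
    ∑' n, (A k n).indicator (fun _ => ENNReal.ofReal (ν (C k n))) x
  have hf : ∀ k, Measurable (f k) := fun k =>
    Measurable.tsum fun n => measurable_const.indicator (hPm _ (hA k n))
  have hint : ∀ k, ∫⁻ x, f k x ∂ρ ≤ 2⁻¹ ^ k := fun k => calc
    ∫⁻ x, f k x ∂ρ = ∑' n, ENNReal.ofReal (ν (C k n)) * ρ (A k n) := by
      rw [lintegral_tsum fun n => (measurable_const.indicator (hPm _ (hA k n))).aemeasurable]
      exact tsum_congr fun n => lintegral_indicator_const (hPm _ (hA k n)) _
    _ ≤ ∑' n, ENNReal.ofReal (π (R k n)) := ENNReal.tsum_le_tsum fun n => by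
      rw [hRAC k n, hπ _ (hA k n) _ (hC k n), ENNReal.ofReal_mul (hμ.nonneg (hA k n)), mul_comm]
      gcongr
      exact hρ _ (hA k n)
    _ ≤ 2⁻¹ ^ k := (hRsum k).le
  have hsum : ∑' k, ∫⁻ x, f k x ∂ρ ≠ ∞ :=
    ne_top_of_le_ne_top (by simp [ENNReal.tsum_geometric]) (ENNReal.tsum_le_tsum hint)
  filter_upwards [ae_tendsto_zero_of_tsum_lintegral_ne_top hf hsum] with x hx
  exact nullFor_section_of_tendsto hQ hν hC (fun k => (hER k).trans_eq (by simp_rw [hRAC])) hx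

/-- Sections of null sets (Lemma C): if `E ⊆ X × Y` is a null set for the
product measure, then for almost every `x` the section
`{y | (x, y) ∈ E}` is a null set in `Y`. -/
theorem sections_of_null_sets {X Y : Type*} (P : Set (Set X)) (Q : Set (Set Y))
    (μ : Set X → ℝ) (ν : Set Y → ℝ) (π : Set (X × Y) → ℝ)
    (hP : IsSemiring P) (hQ : IsSemiring Q)
    (hμ : IsPremeasure P μ) (hν : IsPremeasure Q ν)
    (hπ : ∀ A ∈ P, ∀ B ∈ Q, π (A ×ˢ B) = μ A * ν B)
    (E : Set (X × Y)) (hE : NullFor (ProdSemiring P Q) π E) :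
    NullFor P μ {x | ¬ NullFor Q ν {y | (x, y) ∈ E}} := by
  set μ' := hμ.outerMeasure hP.empty_mem
  let _ : MeasurableSpace X := μ'.caratheodory
  have hPm : ∀ A ∈ P, MeasurableSet A := fun A hA => hμ.isCaratheodory_outerMeasure hP hA
  have hρ : ∀ A ∈ P, μ'.toMeasure le_rfl A ≤ ENNReal.ofReal (μ A) := fun A hA =>
    (toMeasure_apply μ' le_rfl (hPm A hA)).trans_le (hμ.outerMeasure_le _ hA)
  have hae := ae_nullFor_section _ hPm hρ hμ hQ.empty_mem hν hπ hE
  refine hμ.nullFor_of_outerMeasure_eq_zero hP.empty_mem (le_antisymm ?_ bot_le)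
  exact (le_toMeasure_apply μ' le_rfl _).trans_eq (ae_iff.1 hae)
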